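/- For every p ∈ (0,1), τ > 0 and integer M ≥ 0 there exists a constant C_{p,τ,M} > 0 such that the following holds: for every choice of complex coefficients f̃_{−M},…,f̃_M, setting f(θ) = Σ_{m=−M}^{M} f̃_m ψ_m(θ), one has for all integers n ≥ 1 and all k, l ∈ {0,…,N−1} (with N = 2^n) the bound |Σ_{m=−M}^{M} f̃_m (Ã_{m,n})_{kl} − f(θ_l) δ_{kl}| ≤ (C_{p,τ,M} / N^{1−p}) (Σ_{m=−M}^{M} |f̃_m|^2)^{1/2}. -/

import Mathlib

/-!
By orthogonality of the `N`-th roots of unity, `ψ_m(θ_l) δ_{kl}` is `(Ã_{m,n})_{kl}` with every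
`c^{(n)}_{mj}` replaced by `r_m = e^{−τ|m|^p/2}`, so the residual is at most
`(1/N) Σ_{j ∈ J_n} |c^{(n)}_{mj} − r_m|`. Both `c_{mj}` and `r_m` are exponentials of non-positive
numbers (`|m+j|^p ≤ |m|^p + |j|^p`), and `exp` is `1`-Lipschitz on `(−∞, 0]`; hence a term with
`m + j ∈ J_n` is at most `(τ/2) ||m+j|^p − |j|^p| ≤ (τ/2) ((|j|+M)^p − (|j|−M)₊^p)`, and these
bounds telescope over `|j| ≤ N/2` to `O(M (N/2 + M)^p)`. The at most `2M + 1` indices with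
`m + j ∉ J_n` contribute at most `1` each. So the sum is `O(N^p)`, each residual is `O(N^{p−1})`,
and `|f̃_m| ≤ (Σ |f̃_m|²)^{1/2}` for every `m`.
-/

noncomputable section

namespace QECD

/-- The index set `J_n = {−N/2,…,−1,1,…,N/2}` with `N = 2^n`. -/
def Jn (n : ℕ) : Finset ℤ := (Finset.Icc (-(2 ^ (n - 1)) : ℤ) (2 ^ (n - 1))).erase 0

/-- The order-preserving enumeration `o : J_n → {0,…,N−1}`. -/
def oIdx (n : ℕ) (j : ℤ) : ℤ := if j < 0 then j + 2 ^ (n - 1) else j + 2 ^ (n - 1) - 1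

/-- Scaled Fourier basis function `ψ_m(θ) = e^{−τ|m|^p/2} e^{imθ}`. -/
def psi (p τ : ℝ) (m : ℤ) (θ : ℝ) : ℂ :=
  (Real.exp (-(τ * |(m : ℝ)| ^ p) / 2) : ℂ) * Complex.exp (Complex.I * (m : ℂ) * (θ : ℂ))

/-- Structure constants `c_{mj} = e^{−τ(|m|^p + |j|^p − |m+j|^p)/2}`. -/
def cst (p τ : ℝ) (m j : ℤ) : ℝ :=
  Real.exp (-(τ * (|(m : ℝ)| ^ p + |(j : ℝ)| ^ p - |((m + j : ℤ) : ℝ)| ^ p)) / 2)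

/-- Truncated structure constants `c^{(n)}_{mj}`. -/
def cstN (p τ : ℝ) (n : ℕ) (m j : ℤ) : ℝ :=
  if m + j ∈ Jn n then cst p τ m j else 0

/-- Matrix elements `(Ã_{m,n})_{kl}` of the QFT-rotated multiplication operator. -/
def Atilde (p τ : ℝ) (n : ℕ) (m : ℤ) (k l : ℕ) : ℂ :=
  (1 / (2 ^ n : ℂ)) * ∑ j ∈ Jn n,
    Complex.exp (2 * (Real.pi : ℂ) * Complex.I *
        ((((k : ℤ) - (l : ℤ)) * oIdx n j + (k : ℤ) * m : ℤ) : ℂ) / (2 ^ n : ℂ)) *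
      (cstN p τ n m j : ℂ)

open Finset

theorem _root_.Real.abs_exp_sub_exp_le_of_nonpos {u v : ℝ} (hu : u ≤ 0) (hv : v ≤ 0) :
    |Real.exp u - Real.exp v| ≤ |u - v| := by
  wlog huv : v ≤ u generalizing u v
  · rw [abs_sub_comm, abs_sub_comm u]
    exact this hv hu (le_of_not_ge huv)
  have hfactor : Real.exp u - Real.exp v = Real.exp u * (1 - Real.exp (v - u)) := by
    rw [mul_sub, ← Real.exp_add]; ring_nf
  have hexp_le : 1 - Real.exp (v - u) ≤ u - v := by linarith [Real.add_one_le_exp (v - u)]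
  have hexp_nonneg : 0 ≤ 1 - Real.exp (v - u) := by
    linarith [Real.exp_le_one_iff.2 (sub_nonpos.2 huv)]
  rw [hfactor, abs_of_nonneg (by positivity), abs_of_nonneg (sub_nonneg.2 huv)]
  calc Real.exp u * (1 - Real.exp (v - u)) ≤ 1 * (u - v) :=
        mul_le_mul (Real.exp_le_one_iff.2 hu) hexp_le hexp_nonneg zero_le_one
    _ = u - v := one_mul _

theorem abs_add_rpow_le_add_rpow {p : ℝ} (hp0 : 0 ≤ p) (hp1 : p ≤ 1) (x y : ℝ) :
    |x + y| ^ p ≤ |x| ^ p + |y| ^ p :=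
  (Real.rpow_le_rpow (abs_nonneg _) (abs_add_le x y) hp0).trans
    (Real.rpow_add_le_add_rpow (abs_nonneg _) (abs_nonneg _) hp0 hp1)

theorem monotone_natCast_rpow {p : ℝ} (hp : 0 ≤ p) : Monotone fun t : ℕ => (t : ℝ) ^ p :=
  fun _ _ h => Real.rpow_le_rpow (Nat.cast_nonneg _) (Nat.cast_le.2 h) hp

theorem _root_.Monotone.sum_range_sub_shift_le {f : ℕ → ℝ} (hf : Monotone f) (H K : ℕ) :
    ∑ j ∈ range H, (f (j + K) - f j) ≤ K * (f (H + K) - f 0) := by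
  have hKH := sum_range_add f K H
  have hHK := sum_range_add f H K
  rw [add_comm K H] at hKH
  calc ∑ j ∈ range H, (f (j + K) - f j)
      = ∑ i ∈ range K, (f (H + i) - f i) := by
        simp only [sum_sub_distrib, add_comm _ K]
        linarith
    _ ≤ ∑ i ∈ range K, (f (H + K) - f 0) :=
        sum_le_sum fun i hi => sub_le_sub (hf (by simp at hi; omega)) (hf (Nat.zero_le i))
    _ = K * (f (H + K) - f 0) := by rw [sum_const, card_range, nsmul_eq_mul]

theorem sum_comp_natAbs_le {S : Finset ℤ} {H : ℕ} (hS : ∀ j ∈ S, j.natAbs ≤ H) {g : ℕ → ℝ}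
    (hg : ∀ t, 0 ≤ g t) : ∑ j ∈ S, g j.natAbs ≤ 2 * ∑ t ∈ range (H + 1), g t := by
  have hfiber (t : ℕ) : #{j ∈ S | j.natAbs = t} ≤ 2 :=
    (card_le_card fun j hj => by simp at hj ⊢; omega).trans (card_le_two (a := (t : ℤ)) (b := -t))
  rw [sum_comp, mul_sum]
  calc ∑ t ∈ S.image Int.natAbs, #{j ∈ S | j.natAbs = t} • g t
      ≤ ∑ t ∈ S.image Int.natAbs, 2 * g t := sum_le_sum fun t _ => by
        rw [nsmul_eq_mul]
        gcongr
        · exact hg t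
        · exact_mod_cast hfiber t
    _ ≤ ∑ t ∈ range (H + 1), 2 * g t :=
        sum_le_sum_of_subset_of_nonneg
          (image_subset_iff.2 fun j hj => mem_range.2 (Nat.lt_succ_of_le (hS j hj)))
          fun t _ _ => mul_nonneg zero_le_two (hg t)

theorem abs_rpow_add_sub_rpow_le {p : ℝ} (hp : 0 ≤ p) {M : ℕ} {m : ℤ} (hm : m.natAbs ≤ M)
    (j : ℤ) :
    |(|((m + j : ℤ) : ℝ)| ^ p - |(j : ℝ)| ^ p)|
      ≤ ((j.natAbs + M : ℕ) : ℝ) ^ p - ((j.natAbs - M : ℕ) : ℝ) ^ p := by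
  have hmono := monotone_natCast_rpow hp
  simp only [← Int.cast_abs, ← Nat.cast_natAbs]
  exact abs_sub_le_of_le_of_le (hmono (by omega)) (hmono (by omega)) (hmono (by omega))
    (hmono (by omega))

theorem sum_abs_rpow_add_sub_rpow_le {p : ℝ} (hp : 0 ≤ p) {M H : ℕ} {m : ℤ}
    (hm : m.natAbs ≤ M) {S : Finset ℤ} (hS : ∀ j ∈ S, j.natAbs ≤ H) :
    ∑ j ∈ S, |(|((m + j : ℤ) : ℝ)| ^ p - |(j : ℝ)| ^ p)| ≤ 4 * M * ((H + M + 1 : ℕ) : ℝ) ^ p := by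
  set f : ℕ → ℝ := fun s => ((s - M : ℕ) : ℝ) ^ p
  have hf : Monotone f := (monotone_natCast_rpow hp).comp fun _ _ h => Nat.sub_le_sub_right h M
  have hf0 : 0 ≤ f 0 := Real.rpow_nonneg (Nat.cast_nonneg _) p
  have hfH : f (H + 1 + 2 * M) = ((H + M + 1 : ℕ) : ℝ) ^ p := by
    simp only [f]; congr 3; omega
  calc ∑ j ∈ S, |(|((m + j : ℤ) : ℝ)| ^ p - |(j : ℝ)| ^ p)|
      ≤ ∑ j ∈ S, (f (j.natAbs + 2 * M) - f j.natAbs) := sum_le_sum fun j _ => by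
        simpa only [f, show j.natAbs + 2 * M - M = j.natAbs + M by omega]
          using abs_rpow_add_sub_rpow_le hp hm j
    _ ≤ 2 * ∑ t ∈ range (H + 1), (f (t + 2 * M) - f t) :=
        sum_comp_natAbs_le hS fun t => sub_nonneg.2 (hf (Nat.le_add_right t _))
    _ ≤ 2 * ((2 * M : ℕ) * (f (H + 1 + 2 * M) - f 0)) := by
        gcongr; exact hf.sum_range_sub_shift_le _ _
    _ ≤ 4 * M * ((H + M + 1 : ℕ) : ℝ) ^ p := by
        rw [hfH]; push_cast; nlinarith [(Nat.cast_nonneg M : (0 : ℝ) ≤ M)]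

theorem mem_Jn {n : ℕ} {j : ℤ} : j ∈ Jn n ↔ j ≠ 0 ∧ -2 ^ (n - 1) ≤ j ∧ j ≤ 2 ^ (n - 1) := by
  simp [Jn]

theorem natAbs_le_of_mem_Jn {n : ℕ} {j : ℤ} (hj : j ∈ Jn n) : j.natAbs ≤ 2 ^ (n - 1) := by
  have hcast : ((2 ^ (n - 1) : ℕ) : ℤ) = 2 ^ (n - 1) := by norm_num
  rw [mem_Jn] at hj
  omega

theorem card_filter_add_notMem_Jn_le {M : ℕ} {m : ℤ} (hm : m.natAbs ≤ M) (n : ℕ) :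
    #{j ∈ Jn n | m + j ∉ Jn n} ≤ 2 * M + 1 := by
  set H : ℤ := 2 ^ (n - 1)
  calc #{j ∈ Jn n | m + j ∉ Jn n}
      ≤ #(insert (-m) (Icc (H + 1 - M) H ∪ Icc (-H) (M - 1 - H))) := card_le_card fun j hj => by
        simp only [mem_filter, mem_Jn, mem_insert, mem_union, mem_Icc] at hj ⊢
        omega
    _ ≤ #(Icc (H + 1 - M) H) + #(Icc (-H) (M - 1 - H)) + 1 :=
        (card_insert_le _ _).trans (Nat.add_le_add_right (card_union_le _ _) 1)
    _ ≤ 2 * M + 1 := by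
        simp only [Int.card_Icc]
        omega

theorem sum_Jn_oIdx {β : Type*} [AddCommMonoid β] {n : ℕ} (hn : 1 ≤ n) (F : ℤ → β) :
    ∑ j ∈ Jn n, F (oIdx n j) = ∑ r ∈ range (2 ^ n), F r := by
  have hN : (2 : ℤ) ^ n = 2 * 2 ^ (n - 1) := by
    rw [← pow_succ', Nat.sub_add_cancel hn]
  refine sum_nbij' (fun j => (oIdx n j).toNat)
    (fun r => if (r : ℤ) < 2 ^ (n - 1) then r - 2 ^ (n - 1) else r + 1 - 2 ^ (n - 1))
    (fun j hj => ?_) (fun r hr => ?_) (fun j hj => ?_) (fun r hr => ?_) (fun j hj => congrArg F ?_)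
  all_goals
    simp only [mem_range, mem_Jn, oIdx] at *
    have : ((2 ^ n : ℕ) : ℤ) = 2 ^ n := by push_cast; ring
    split_ifs <;> omega

theorem sum_range_exp_eq_zero_of_not_dvd {N : ℕ} {d : ℤ} (hd : ¬ (N : ℤ) ∣ d) :
    ∑ r ∈ range N, Complex.exp (2 * Real.pi * Complex.I * d * r / N) = 0 := by
  rcases eq_or_ne N 0 with rfl | hN
  · simp
  have hζ := Complex.isPrimitiveRoot_exp N hN
  set ζ := Complex.exp (2 * Real.pi * Complex.I / N)
  have hpow (r : ℕ) : Complex.exp (2 * Real.pi * Complex.I * d * r / N) = (ζ ^ d) ^ r := by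
    rw [← zpow_natCast, ← zpow_mul, ← Complex.exp_int_mul]
    push_cast
    ring_nf
  have hne : ζ ^ d ≠ 1 := (hζ.zpow_eq_one_iff_dvd d).not.2 hd
  have hone : (ζ ^ d) ^ N = 1 := by
    rw [← zpow_natCast, ← zpow_mul, mul_comm, zpow_mul, zpow_natCast, hζ.pow_eq_one, one_zpow]
  simp_rw [hpow]
  rw [geom_sum_eq hne, hone, sub_self, zero_div]

theorem sum_Jn_exp_oIdx {n : ℕ} (hn : 1 ≤ n) {d : ℤ} (hd : |d| < 2 ^ n) (a : ℤ) :
    ∑ j ∈ Jn n, Complex.exp (2 * Real.pi * Complex.I * ((d * oIdx n j + a : ℤ) : ℂ) / 2 ^ n)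
      = if d = 0 then 2 ^ n * Complex.exp (2 * Real.pi * Complex.I * a / 2 ^ n) else 0 := by
  have hsplit (t : ℤ) : Complex.exp (2 * Real.pi * Complex.I * ((d * t + a : ℤ) : ℂ) / 2 ^ n)
      = Complex.exp (2 * Real.pi * Complex.I * a / 2 ^ n)
        * Complex.exp (2 * Real.pi * Complex.I * d * t / ((2 ^ n : ℕ) : ℂ)) := by
    rw [← Complex.exp_add]
    push_cast
    ring_nf
  simp_rw [hsplit, ← mul_sum]
  rw [sum_Jn_oIdx hn (fun t => Complex.exp (2 * Real.pi * Complex.I * d * t / ((2 ^ n : ℕ) : ℂ)))]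
  split_ifs with hd0
  · simp [hd0, mul_comm]
  · simp only [Int.cast_natCast]
    rw [sum_range_exp_eq_zero_of_not_dvd, mul_zero]
    exact fun hdvd => hd0 (Int.eq_zero_of_abs_lt_dvd hdvd (by exact_mod_cast hd))

theorem abs_cst_sub_le {p τ : ℝ} (hp0 : 0 ≤ p) (hp1 : p ≤ 1) (hτ : 0 ≤ τ) (m j : ℤ) :
    |cst p τ m j - Real.exp (-(τ * |(m : ℝ)| ^ p) / 2)|
      ≤ τ / 2 * |(|((m + j : ℤ) : ℝ)| ^ p - |(j : ℝ)| ^ p)| := by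
  have hsubadd : |((m + j : ℤ) : ℝ)| ^ p ≤ |(m : ℝ)| ^ p + |(j : ℝ)| ^ p := by
    push_cast
    exact abs_add_rpow_le_add_rpow hp0 hp1 _ _
  have hnonneg : 0 ≤ τ * |(m : ℝ)| ^ p := by positivity
  refine (Real.abs_exp_sub_exp_le_of_nonpos ?_ (by linarith)).trans (le_of_eq ?_)
  · linarith [mul_nonneg hτ (sub_nonneg.2 hsubadd)]
  · rw [← abs_of_nonneg (by positivity : 0 ≤ τ / 2), ← abs_mul]
    ring_nf

theorem abs_cstN_sub_le {p τ : ℝ} (hp0 : 0 ≤ p) (hp1 : p ≤ 1) (hτ : 0 ≤ τ) (n : ℕ) (m j : ℤ) :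
    |cstN p τ n m j - Real.exp (-(τ * |(m : ℝ)| ^ p) / 2)|
      ≤ τ / 2 * |(|((m + j : ℤ) : ℝ)| ^ p - |(j : ℝ)| ^ p)| + if m + j ∉ Jn n then 1 else 0 := by
  unfold cstN
  split_ifs with hmj
  · rw [add_zero]
    exact abs_cst_sub_le hp0 hp1 hτ m j
  · rw [zero_sub, abs_neg, abs_of_pos (Real.exp_pos _)]
    have hnonneg : 0 ≤ τ * |(m : ℝ)| ^ p := by positivity
    have hexp : Real.exp (-(τ * |(m : ℝ)| ^ p) / 2) ≤ 1 := Real.exp_le_one_iff.2 (by linarith)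
    linarith [mul_nonneg (div_nonneg hτ zero_le_two)
      (abs_nonneg (|((m + j : ℤ) : ℝ)| ^ p - |(j : ℝ)| ^ p))]

def residualConst (τ : ℝ) (M : ℕ) : ℝ := 2 * τ * M * (M + 1) + 2 * M + 1

theorem residualConst_pos {τ : ℝ} (hτ : 0 ≤ τ) (M : ℕ) : 0 < residualConst τ M := by
  unfold residualConst
  positivity

theorem sum_abs_cstN_sub_le {p τ : ℝ} (hp0 : 0 ≤ p) (hp1 : p ≤ 1) (hτ : 0 ≤ τ) {M : ℕ} {m : ℤ}
    (hm : m.natAbs ≤ M) {n : ℕ} (hn : 1 ≤ n) :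
    ∑ j ∈ Jn n, |cstN p τ n m j - Real.exp (-(τ * |(m : ℝ)| ^ p) / 2)|
      ≤ residualConst τ M * ((2 : ℝ) ^ n) ^ p := by
  set N : ℝ := (2 : ℝ) ^ n
  have hN : 1 ≤ N ^ p := Real.one_le_rpow (one_le_pow₀ one_le_two) hp0
  have hrpow_le : ((2 ^ (n - 1) + M + 1 : ℕ) : ℝ) ^ p ≤ (M + 1) * N ^ p := by
    have hle : 2 ^ (n - 1) + M + 1 ≤ (M + 1) * 2 ^ n := by
      rw [← Nat.sub_add_cancel hn, pow_succ, Nat.add_sub_cancel]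
      nlinarith [Nat.one_le_two_pow (n := n - 1)]
    calc ((2 ^ (n - 1) + M + 1 : ℕ) : ℝ) ^ p ≤ ((M + 1) * N) ^ p :=
          Real.rpow_le_rpow (Nat.cast_nonneg _) (by simp only [N]; exact_mod_cast hle) hp0
      _ = (M + 1) ^ p * N ^ p := Real.mul_rpow (by positivity) (by positivity)
      _ ≤ (M + 1) * N ^ p := by
          gcongr
          simpa using Real.rpow_le_rpow_of_exponent_le (by simp : (1 : ℝ) ≤ M + 1) hp1
  have hdiff := sum_abs_rpow_add_sub_rpow_le hp0 hm (fun j => natAbs_le_of_mem_Jn (n := n))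
  have hcard : (#{j ∈ Jn n | m + j ∉ Jn n} : ℝ) ≤ 2 * M + 1 := by
    exact_mod_cast card_filter_add_notMem_Jn_le hm n
  calc ∑ j ∈ Jn n, |cstN p τ n m j - Real.exp (-(τ * |(m : ℝ)| ^ p) / 2)|
      ≤ ∑ j ∈ Jn n, (τ / 2 * |(|((m + j : ℤ) : ℝ)| ^ p - |(j : ℝ)| ^ p)|
          + if m + j ∉ Jn n then 1 else 0) :=
        sum_le_sum fun j _ => abs_cstN_sub_le hp0 hp1 hτ n m j
    _ = τ / 2 * ∑ j ∈ Jn n, |(|((m + j : ℤ) : ℝ)| ^ p - |(j : ℝ)| ^ p)|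
          + #{j ∈ Jn n | m + j ∉ Jn n} := by
        rw [sum_add_distrib, mul_sum, sum_boole]
    _ ≤ τ / 2 * (4 * M * ((M + 1) * N ^ p)) + (2 * M + 1) * N ^ p := by
        gcongr
        · exact hdiff.trans (by gcongr)
        · nlinarith
    _ = residualConst τ M * N ^ p := by
        unfold residualConst
        ring

theorem Atilde_sub_psi_eq {p τ : ℝ} {n : ℕ} (hn : 1 ≤ n) (m : ℤ) {k l : ℕ} (hk : k < 2 ^ n)
    (hl : l < 2 ^ n) :
    Atilde p τ n m k l - psi p τ m (2 * Real.pi * l / 2 ^ n) * (if k = l then 1 else 0)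
      = 1 / 2 ^ n * ∑ j ∈ Jn n,
          Complex.exp (2 * Real.pi * Complex.I *
              ((((k : ℤ) - l) * oIdx n j + k * m : ℤ) : ℂ) / 2 ^ n)
            * ((cstN p τ n m j - Real.exp (-(τ * |(m : ℝ)| ^ p) / 2) : ℝ) : ℂ) := by
  have hd : |(k : ℤ) - l| < 2 ^ n := by
    have hcast : ((2 ^ n : ℕ) : ℤ) = 2 ^ n := by push_cast; ring
    rw [abs_sub_lt_iff]
    omega
  simp only [Complex.ofReal_sub, mul_sub, sum_sub_distrib, ← sum_mul, sum_Jn_exp_oIdx hn hd]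
  rw [Atilde]
  congr 1
  rcases eq_or_ne k l with rfl | hkl
  · simp only [psi, if_true, sub_self, mul_one, Complex.ofReal_exp]
    push_cast
    field_simp
  · simp [hkl, sub_eq_zero]

theorem norm_exp_two_pi_I_mul_int_div (z : ℤ) (n : ℕ) :
    ‖Complex.exp (2 * Real.pi * Complex.I * z / 2 ^ n)‖ = 1 := by
  rw [← Complex.norm_exp_ofReal_mul_I (2 * Real.pi * z / 2 ^ n)]
  push_cast
  ring_nf

theorem norm_Atilde_sub_psi_le {p τ : ℝ} (hp0 : 0 ≤ p) (hp1 : p ≤ 1) (hτ : 0 ≤ τ) {M : ℕ}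
    {m : ℤ} (hm : m.natAbs ≤ M) {n : ℕ} (hn : 1 ≤ n) {k l : ℕ} (hk : k < 2 ^ n)
    (hl : l < 2 ^ n) :
    ‖Atilde p τ n m k l - psi p τ m (2 * Real.pi * l / 2 ^ n) * (if k = l then 1 else 0)‖
      ≤ residualConst τ M / ((2 : ℝ) ^ n) ^ (1 - p) := by
  rw [Atilde_sub_psi_eq hn m hk hl, norm_mul, norm_div, norm_one, norm_pow, Complex.norm_two]
  calc _ ≤ 1 / 2 ^ n * ∑ j ∈ Jn n, |cstN p τ n m j - Real.exp (-(τ * |(m : ℝ)| ^ p) / 2)| := by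
        gcongr
        refine (norm_sum_le _ _).trans (sum_le_sum fun j _ => ?_)
        rw [norm_mul, norm_exp_two_pi_I_mul_int_div, Complex.norm_real, Real.norm_eq_abs, one_mul]
    _ ≤ 1 / 2 ^ n * (residualConst τ M * ((2 : ℝ) ^ n) ^ p) := by
        gcongr
        exact sum_abs_cstN_sub_le hp0 hp1 hτ hm hn
    _ = residualConst τ M / ((2 : ℝ) ^ n) ^ (1 - p) := by
        rw [Real.rpow_sub (by positivity), Real.rpow_one]
        field_simp

theorem norm_le_sqrt_sum_sq {ι E : Type*} [SeminormedAddCommGroup E] {s : Finset ι} {a : ι → E}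
    {i : ι} (hi : i ∈ s) : ‖a i‖ ≤ √(∑ j ∈ s, ‖a j‖ ^ 2) := by
  simpa using Real.abs_le_sqrt
    (single_le_sum (f := fun j => ‖a j‖ ^ 2) (fun _ _ => sq_nonneg _) hi)

/-- For every `p ∈ (0,1)`, `τ > 0` and integer `M ≥ 0` there exists a constant
`C_{p,τ,M} > 0` such that, for every bandlimited observable `f = Σ_{|m|≤M} f̃_m ψ_m`, all `n ≥ 1`
and all `k, l ∈ {0,…,N−1}`,
`|Σ_m f̃_m (Ã_{m,n})_{kl} − f(θ_l) δ_{kl}| ≤ (C_{p,τ,M}/N^{1−p}) (Σ_m |f̃_m|²)^{1/2}`. -/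
theorem bandlimited_residual_bound (p τ : ℝ) (hp : p ∈ Set.Ioo (0 : ℝ) 1) (hτ : 0 < τ)
    (M : ℕ) :
    ∃ C : ℝ, 0 < C ∧
      ∀ (ft : ℤ → ℂ) (n : ℕ), 1 ≤ n → ∀ (k l : ℕ), k < 2 ^ n → l < 2 ^ n →
        ‖(∑ m ∈ Finset.Icc (-(M : ℤ)) (M : ℤ), ft m * Atilde p τ n m k l)
            - (∑ m ∈ Finset.Icc (-(M : ℤ)) (M : ℤ),
                ft m * psi p τ m (2 * Real.pi * l / 2 ^ n)) * (if k = l then 1 else 0)‖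
          ≤ C / ((2 ^ n : ℝ)) ^ (1 - p)
              * Real.sqrt (∑ m ∈ Finset.Icc (-(M : ℤ)) (M : ℤ), (‖ft m‖) ^ 2) := by
  refine ⟨(2 * M + 1) * residualConst τ M, mul_pos (by positivity) (residualConst_pos hτ.le M),
    fun ft n hn k l hk hl => ?_⟩
  set S := √(∑ m ∈ Icc (-(M : ℤ)) M, ‖ft m‖ ^ 2)
  rw [sum_mul, ← sum_sub_distrib]
  calc _ ≤ ∑ m ∈ Icc (-(M : ℤ)) M, S * (residualConst τ M / ((2 : ℝ) ^ n) ^ (1 - p)) := by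
        refine (norm_sum_le _ _).trans (sum_le_sum fun m hm => ?_)
        rw [mul_assoc, ← mul_sub, norm_mul]
        have hmM : m.natAbs ≤ M := by simp only [mem_Icc] at hm; omega
        exact mul_le_mul (norm_le_sqrt_sum_sq hm)
          (norm_Atilde_sub_psi_le hp.1.le hp.2.le hτ.le hmM hn hk hl) (norm_nonneg _)
          (Real.sqrt_nonneg _)
    _ = (2 * M + 1) * residualConst τ M / ((2 : ℝ) ^ n) ^ (1 - p) * S := by
        rw [sum_const, Int.card_Icc, nsmul_eq_mul, show (M + 1 - -M : ℤ).toNat = 2 * M + 1 by omega]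
        push_cast
        ring

end QECD
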